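/- arXiv:2210.09579 — 7 statements merged into one kernel-verified Lean document; each statement's English description precedes it below -/
import Mathlib

section
/- (Deterministic core of Lemma 1, optimism of UCBVI-Shaped.) Suppose that for all h ∈ {0,…,H−1} and all (s,a) ∈ S × A one has |∑_{s'∈S} (P̂_h(s'|s,a) − P_h(s'|s,a)) · V*_{h+1}(s')| ≤ b_h(s,a). Then the clipped empirical value functions are optimistic: Q̂_h(s,a) ≥ Q*_h(s,a) for all h ∈ {0,…,H−1} and all (s,a) ∈ S × A, and V̂_h(s) ≥ V*_h(s) for all h ∈ {0,…,H} and all s ∈ S. -/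
/-- Deterministic core of Lemma 1 (optimism of UCBVI-Shaped): if the bonuses dominate
the model error against the optimal value function, then the clipped empirical value
functions are optimistic. -/
theorem ucbvi_shaped_optimism
    {S A : Type*} [Fintype S] [Fintype A] [Nonempty S] [Nonempty A]
    (H : ℕ) (hH : 1 ≤ H)
    -- reward function
    (r : S → A → ℝ) (hr : ∀ s a, 0 ≤ r s a ∧ r s a ≤ 1)
    -- true transition kernels
    (P : ℕ → S → A → S → ℝ)
    (hP : ∀ h < H, ∀ s a, (∀ s', 0 ≤ P h s a s') ∧ ∑ s', P h s a s' = 1)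
    -- optimal value functions, defined by backward recursion
    (Vstar : ℕ → S → ℝ) (Qstar : ℕ → S → A → ℝ)
    (hVstarH : ∀ s, Vstar H s = 0)
    (hQstar : ∀ h < H, ∀ s a,
      Qstar h s a = r s a + ∑ s', P h s a s' * Vstar (h + 1) s')
    (hVstar : ∀ h < H, ∀ s,
      Vstar h s = Finset.univ.sup' Finset.univ_nonempty (fun a => Qstar h s a))
    -- shaping term
    (β : ℝ) (hβ : 1 ≤ β)
    (Vtil : ℕ → S → ℝ) (hVtil_nonneg : ∀ h ≤ H, ∀ s, 0 ≤ Vtil h s)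
    (hsandwich : ∀ h ≤ H, ∀ s, Vstar h s ≤ β * Vtil h s)
    -- empirical transition kernels
    (Phat : ℕ → S → A → S → ℝ)
    (hPhat : ∀ h < H, ∀ s a, (∀ s', 0 ≤ Phat h s a s') ∧ ∑ s', Phat h s a s' = 1)
    -- bonus functions
    (b : ℕ → S → A → ℝ) (hb : ∀ h < H, ∀ s a, 0 ≤ b h s a)
    -- clipped empirical value functions, defined by backward recursion
    (Vhat : ℕ → S → ℝ) (Qhat : ℕ → S → A → ℝ)
    (hVhatH : ∀ s, Vhat H s = 0)
    (hQhat : ∀ h < H, ∀ s a,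
      Qhat h s a
        = min (r s a + b h s a + ∑ s', Phat h s a s' * Vhat (h + 1) s') (H : ℝ))
    (hVhat : ∀ h < H, ∀ s,
      Vhat h s = min (Finset.univ.sup' Finset.univ_nonempty (fun a => Qhat h s a))
          (β * Vtil h s))
    -- the bonuses dominate the model error against the optimal values
    (hbonus : ∀ h < H, ∀ s a,
      |∑ s', (Phat h s a s' - P h s a s') * Vstar (h + 1) s'| ≤ b h s a) :
    (∀ h < H, ∀ s a, Qstar h s a ≤ Qhat h s a) ∧
      (∀ h ≤ H, ∀ s, Vstar h s ≤ Vhat h s) := by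
  -- Q-step: if optimism and the (H - (h+1)) bound hold at h+1, then Qstar ≤ Qhat and
  -- Qstar ≤ H - h at step h.
  have Qstep : ∀ h, h < H →
      (∀ s, Vstar (h+1) s ≤ Vhat (h+1) s ∧ Vstar (h+1) s ≤ (H : ℝ) - (h+1)) →
      ∀ s a, Qstar h s a ≤ Qhat h s a ∧ Qstar h s a ≤ (H : ℝ) - h := by
    intro h hh ih s a
    have hPh := hP h hh s a
    have hPhath := hPhat h hh s a
    have hbd := hbonus h hh s a
    have hsum : ∑ s', P h s a s' * Vstar (h+1) s'
        ≤ b h s a + ∑ s', Phat h s a s' * Vstar (h+1) s' := by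
      have := (abs_le.mp hbd).1
      have hsplit : ∑ s', (Phat h s a s' - P h s a s') * Vstar (h + 1) s'
          = (∑ s', Phat h s a s' * Vstar (h+1) s')
            - ∑ s', P h s a s' * Vstar (h+1) s' := by
        rw [← Finset.sum_sub_distrib]; congr 1; ext s'; ring
      rw [hsplit] at this; linarith
    have hsum2 : ∑ s', Phat h s a s' * Vstar (h+1) s'
        ≤ ∑ s', Phat h s a s' * Vhat (h+1) s' :=
      Finset.sum_le_sum fun s' _ =>
        mul_le_mul_of_nonneg_left (ih s').1 (hPhath.1 s')
    have hQle : Qstar h s a ≤ r s a + b h s a + ∑ s', Phat h s a s' * Vhat (h+1) s' := by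
      rw [hQstar h hh s a]; linarith
    have hQH : Qstar h s a ≤ (H : ℝ) - h := by
      rw [hQstar h hh s a]
      have hsum3 : ∑ s', P h s a s' * Vstar (h+1) s'
          ≤ ∑ s', P h s a s' * ((H : ℝ) - (h+1)) :=
        Finset.sum_le_sum fun s' _ =>
          mul_le_mul_of_nonneg_left (ih s').2 (hPh.1 s')
      rw [← Finset.sum_mul, hPh.2, one_mul] at hsum3
      have := (hr s a).2
      push_cast
      push_cast at hsum3
      linarith
    refine ⟨?_, hQH⟩
    rw [hQhat h hh s a]
    refine le_min hQle (hQH.trans ?_)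
    have : (0:ℝ) ≤ (h:ℝ) := Nat.cast_nonneg h
    linarith
  -- main downward induction
  have key : ∀ k, ∀ h, h ≤ H → H - h ≤ k →
      ∀ s, Vstar h s ≤ Vhat h s ∧ Vstar h s ≤ (H : ℝ) - h := by
    intro k
    induction k with
    | zero =>
      intro h hle hk s
      have : h = H := le_antisymm hle (by omega)
      subst this
      rw [hVstarH s, hVhatH s]
      simp
    | succ k ihk =>
      intro h hle hk s
      rcases eq_or_lt_of_le hle with heq | hlt
      · subst heq
        rw [hVstarH s, hVhatH s]
        simp
      · have ih : ∀ s, Vstar (h+1) s ≤ Vhat (h+1) s ∧ Vstar (h+1) s ≤ (H : ℝ) - (h+1) := by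
          intro s'
          have := ihk (h+1) (by omega) (by omega) s'
          simpa using this
        have hQ := Qstep h hlt ih
        constructor
        · rw [hVstar h hlt s, hVhat h hlt s]
          refine le_min ?_ ?_
          · exact Finset.sup'_le _ _ fun a _ =>
              ((hQ s a).1).trans (Finset.le_sup' _ (Finset.mem_univ a))
          · rw [← hVstar h hlt s]; exact hsandwich h hle s
        · rw [hVstar h hlt s]
          exact Finset.sup'_le _ _ fun a _ => (hQ s a).2
  refine ⟨fun h hh s a => ?_, fun h hh s => (key (H - h) h hh le_rfl s).1⟩
  exact (Qstep h hh (fun s' => by simpa using key (H - (h+1)) (h+1) hh le_rfl s') s a).1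
end

section
/- (Deterministic core of Corollary 4.) Let b̃_h : S × A → [0,∞) for h ∈ {0,…,H−1} satisfy β · |∑_{s'∈S} (P̂_h(s'|s,a) − P_h(s'|s,a)) · Ṽ_{h+1}(s')| ≤ b̃_h(s,a) for all (s,a) ∈ S × A and all h. Then for all h ∈ {0,…,H−1} and all (s,a) ∈ S × A, the clipped empirical Q-function satisfies Q̂_h(s,a) ≤ Q̃^u_h(s,a) + b_h(s,a) + b̃_h(s,a), where Q̃^u_h(s,a) = r(s,a) + β ∑_{s'∈S} P_h(s'|s,a) Ṽ_{h+1}(s'). -/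
/-- Deterministic core of Corollary 4: the clipped empirical Q-function is upper bounded
by the surrogate Q-function `Q̃ᵘ` plus the two bonus terms. -/
theorem clipped_Q_upper_bound_by_surrogate
    {S A : Type*} [Fintype S] [Fintype A] [Nonempty S] [Nonempty A]
    (H : ℕ) (hH : 1 ≤ H)
    -- reward function
    (r : S → A → ℝ) (hr : ∀ s a, 0 ≤ r s a ∧ r s a ≤ 1)
    -- true transition kernels
    (P : ℕ → S → A → S → ℝ)
    (hP : ∀ h < H, ∀ s a, (∀ s', 0 ≤ P h s a s') ∧ ∑ s', P h s a s' = 1)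
    -- optimal value functions, defined by backward recursion
    (Vstar : ℕ → S → ℝ) (Qstar : ℕ → S → A → ℝ)
    (hVstarH : ∀ s, Vstar H s = 0)
    (hQstar : ∀ h < H, ∀ s a,
      Qstar h s a = r s a + ∑ s', P h s a s' * Vstar (h + 1) s')
    (hVstar : ∀ h < H, ∀ s,
      Vstar h s = Finset.univ.sup' Finset.univ_nonempty (fun a => Qstar h s a))
    -- shaping term
    (β : ℝ) (hβ : 1 ≤ β)
    (Vtil : ℕ → S → ℝ) (hVtil_nonneg : ∀ h ≤ H, ∀ s, 0 ≤ Vtil h s)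
    (hsandwich : ∀ h ≤ H, ∀ s, Vstar h s ≤ β * Vtil h s)
    -- empirical transition kernels
    (Phat : ℕ → S → A → S → ℝ)
    (hPhat : ∀ h < H, ∀ s a, (∀ s', 0 ≤ Phat h s a s') ∧ ∑ s', Phat h s a s' = 1)
    -- bonus functions
    (b : ℕ → S → A → ℝ) (hb : ∀ h < H, ∀ s a, 0 ≤ b h s a)
    -- clipped empirical value functions, defined by backward recursion
    (Vhat : ℕ → S → ℝ) (Qhat : ℕ → S → A → ℝ)
    (hVhatH : ∀ s, Vhat H s = 0)
    (hQhat : ∀ h < H, ∀ s a,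
      Qhat h s a
        = min (r s a + b h s a + ∑ s', Phat h s a s' * Vhat (h + 1) s') (H : ℝ))
    (hVhat : ∀ h < H, ∀ s,
      Vhat h s = min (Finset.univ.sup' Finset.univ_nonempty (fun a => Qhat h s a))
          (β * Vtil h s))
    -- the "tilde bonus" dominates the model error against the shaping values
    (btil : ℕ → S → A → ℝ)
    (hbtil : ∀ h < H, ∀ s a,
      β * |∑ s', (Phat h s a s' - P h s a s') * Vtil (h + 1) s'| ≤ btil h s a) :
    ∀ h < H, ∀ s a,
      Qhat h s a ≤
        (r s a + β * ∑ s', P h s a s' * Vtil (h + 1) s') + b h s a + btil h s a := by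
  intro h hh s a
  have hVle : ∀ s', Vhat (h + 1) s' ≤ β * Vtil (h + 1) s' := by
    intro s'
    rcases lt_or_eq_of_le (Nat.succ_le_of_lt hh) with h1 | h1
    · rw [hVhat (h + 1) h1 s']; exact min_le_right _ _
    · have h2 : h + 1 = H := h1
      rw [h2, hVhatH s']
      exact mul_nonneg (le_trans zero_le_one hβ) (hVtil_nonneg H le_rfl s')
  have hsum : ∑ s', Phat h s a s' * Vhat (h + 1) s'
      ≤ β * ∑ s', P h s a s' * Vtil (h + 1) s' + btil h s a := by
    have h1 : ∑ s', Phat h s a s' * Vhat (h + 1) s'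
        ≤ ∑ s', Phat h s a s' * (β * Vtil (h + 1) s') := by
      apply Finset.sum_le_sum
      intro s' _
      exact mul_le_mul_of_nonneg_left (hVle s') ((hPhat h hh s a).1 s')
    have h2 : ∑ s', Phat h s a s' * (β * Vtil (h + 1) s')
        = β * ∑ s', P h s a s' * Vtil (h + 1) s'
          + β * ∑ s', (Phat h s a s' - P h s a s') * Vtil (h + 1) s' := by
      rw [Finset.mul_sum, Finset.mul_sum, ← Finset.sum_add_distrib]
      congr 1; ext s'; ring
    have h3 : β * ∑ s', (Phat h s a s' - P h s a s') * Vtil (h + 1) s' ≤ btil h s a := by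
      calc β * ∑ s', (Phat h s a s' - P h s a s') * Vtil (h + 1) s'
          ≤ β * |∑ s', (Phat h s a s' - P h s a s') * Vtil (h + 1) s'| :=
            mul_le_mul_of_nonneg_left (le_abs_self _) (le_trans zero_le_one hβ)
        _ ≤ btil h s a := hbtil h hh s a
    linarith
  have := hQhat h hh s a
  rw [this]
  calc min (r s a + b h s a + ∑ s', Phat h s a s' * Vhat (h + 1) s') (H : ℝ)
      ≤ r s a + b h s a + ∑ s', Phat h s a s' * Vhat (h + 1) s' := min_le_left _ _
    _ ≤ (r s a + β * ∑ s', P h s a s' * Vtil (h + 1) s') + b h s a + btil h s a := by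
        linarith
end

section
/- (Deterministic core of Lemma 5: pruning of Δ-pseudosuboptimal actions.) Fix h ∈ {0,…,H−1}, s ∈ S, Δ > 0, real numbers L ≥ 0 and N > 0, and let Ṽmax = max_{s'∈S, h'∈{0,…,H}} Ṽ_{h'}(s'). Let Q : A → ℝ be any function such that (i) there exists a* ∈ A with Q(a*) ≥ V*_h(s); (ii) Q(a) ≤ Q̃^u_h(s,a) + 32 β Ṽmax √(L/N) + 24 β Ṽmax L/N for a fixed action a ∈ A, where Q̃^u_h(s,a) = r(s,a) + β ∑_{s'∈S} P_h(s'|s,a) Ṽ_{h+1}(s'); (iii) the pair (s,a) is Δ-pseudosuboptimal, i.e. V*_h(s) ≥ Δ + Q̃^u_h(s,a); and (iv) N > 8192 β² Ṽmax² L / Δ². Then Q(a) < Q(a*); in particular, a is not a maximizer of Q over A. -/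
/-- Deterministic core of Lemma 5: once the visitation count `N` exceeds the threshold
`8192 β² Ṽmax² L / Δ²`, a `Δ`-pseudosuboptimal action is strictly dominated and hence
not a maximizer of the (optimistic) Q-values. -/
theorem pruning_of_pseudosuboptimal_actions
    {S A : Type*} [Fintype S] [Fintype A] [Nonempty S] [Nonempty A]
    (H : ℕ) (hH : 1 ≤ H)
    -- reward function
    (r : S → A → ℝ) (hr : ∀ s a, 0 ≤ r s a ∧ r s a ≤ 1)
    -- true transition kernels
    (P : ℕ → S → A → S → ℝ)
    (hP : ∀ h < H, ∀ s a, (∀ s', 0 ≤ P h s a s') ∧ ∑ s', P h s a s' = 1)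
    -- optimal value functions, defined by backward recursion
    (Vstar : ℕ → S → ℝ) (Qstar : ℕ → S → A → ℝ)
    (hVstarH : ∀ s, Vstar H s = 0)
    (hQstar : ∀ h < H, ∀ s a,
      Qstar h s a = r s a + ∑ s', P h s a s' * Vstar (h + 1) s')
    (hVstar : ∀ h < H, ∀ s,
      Vstar h s = Finset.univ.sup' Finset.univ_nonempty (fun a => Qstar h s a))
    -- shaping term
    (β : ℝ) (hβ : 1 ≤ β)
    (Vtil : ℕ → S → ℝ) (hVtil_nonneg : ∀ h ≤ H, ∀ s, 0 ≤ Vtil h s)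
    (hsandwich : ∀ h ≤ H, ∀ s, Vstar h s ≤ β * Vtil h s)
    -- fixed stage, state, gap, confidence factor and count
    (h : ℕ) (hh : h < H) (s : S)
    (Δ : ℝ) (hΔ : 0 < Δ)
    (L N : ℝ) (hL : 0 ≤ L) (hN : 0 < N)
    -- `Ṽmax` is the maximum of the shaping values over all states and stages `≤ H`
    (Vtilmax : ℝ)
    (hVtilmax : IsGreatest {x : ℝ | ∃ h' ≤ H, ∃ s' : S, x = Vtil h' s'} Vtilmax)
    -- an arbitrary Q-function over actions satisfying (i)–(iv)
    (Q : A → ℝ) (astar a : A)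
    (hi : Vstar h s ≤ Q astar)
    (hii : Q a ≤ (r s a + β * ∑ s', P h s a s' * Vtil (h + 1) s')
        + 32 * β * Vtilmax * Real.sqrt (L / N) + 24 * β * Vtilmax * L / N)
    (hiii : Vstar h s ≥ Δ + (r s a + β * ∑ s', P h s a s' * Vtil (h + 1) s'))
    (hiv : N > 8192 * β ^ 2 * Vtilmax ^ 2 * L / Δ ^ 2) :
    Q a < Q astar ∧ ¬ (∀ a', Q a' ≤ Q a) := by

  -- basic positivity facts
  have hβ0 : (0:ℝ) < β := lt_of_lt_of_le one_pos hβ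
  -- Vtil h s ≤ Vtilmax
  have hmem : Vtil h s ∈ {x : ℝ | ∃ h' ≤ H, ∃ s' : S, x = Vtil h' s'} :=
    ⟨h, le_of_lt hh, s, rfl⟩
  have hVhs : Vtil h s ≤ Vtilmax := hVtilmax.2 hmem
  -- Δ ≤ β * Vtilmax
  have hQtil_nonneg : 0 ≤ r s a + β * ∑ s', P h s a s' * Vtil (h + 1) s' := by
    have h1 : 0 ≤ r s a := (hr s a).1
    have h2 : 0 ≤ ∑ s', P h s a s' * Vtil (h + 1) s' := by
      apply Finset.sum_nonneg
      intro s' _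
      exact mul_nonneg ((hP h hh s a).1 s') (hVtil_nonneg (h+1) hh s')
    positivity
  have hΔx : Δ ≤ β * Vtilmax := by
    have h1 : Vstar h s ≤ β * Vtil h s := hsandwich h (le_of_lt hh) s
    have h2 : β * Vtil h s ≤ β * Vtilmax := by
      exact mul_le_mul_of_nonneg_left hVhs (le_of_lt hβ0)
    linarith
  set x := β * Vtilmax with hxdef
  have hx0 : 0 < x := lt_of_lt_of_le hΔ hΔx
  -- from hiv: 8192 * x^2 * (L/N) < Δ^2
  have hkey : 8192 * x ^ 2 * (L / N) < Δ ^ 2 := by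
    have hΔ2 : (0:ℝ) < Δ ^ 2 := by positivity
    have h1 : 8192 * β ^ 2 * Vtilmax ^ 2 * L < N * Δ ^ 2 := by
      have := (div_lt_iff₀ hΔ2).mp hiv
      linarith
    have h2 : 8192 * x ^ 2 * (L / N) * N < Δ ^ 2 * N := by
      have hx2 : x ^ 2 = β ^ 2 * Vtilmax ^ 2 := by ring
      field_simp
      nlinarith
    exact lt_of_mul_lt_mul_right (by linarith) (le_of_lt hN)
  set t := L / N with htdef
  have ht0 : 0 ≤ t := div_nonneg hL (le_of_lt hN)
  set q := Real.sqrt t with hqdef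
  have hq0 : 0 ≤ q := Real.sqrt_nonneg t
  have hq2 : q ^ 2 = t := Real.sq_sqrt ht0
  -- term 1
  have hterm1 : 32 * x * q < Δ / 2 := by
    nlinarith [sq_nonneg (64 * x * q - Δ), mul_pos hΔ hΔ, mul_nonneg (mul_nonneg (le_of_lt hx0) hq0) (le_of_lt hΔ)]
  -- term 2
  have hterm2 : 24 * x * t < Δ / 2 := by
    nlinarith [mul_pos hx0 hx0, mul_nonneg (le_of_lt hx0) ht0, mul_le_mul_of_nonneg_left hΔx (le_of_lt hΔ)]
  have hsum : 32 * x * q + 24 * x * t < Δ := by linarith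
  have hQa : Q a < Q astar := by
    have e1 : 32 * β * Vtilmax * q = 32 * x * q := by ring
    have e2 : 24 * β * Vtilmax * L / N = 24 * x * t := by
      rw [htdef, hxdef]; ring
    calc Q a ≤ (r s a + β * ∑ s', P h s a s' * Vtil (h + 1) s')
        + 32 * β * Vtilmax * q + 24 * β * Vtilmax * L / N := hii
      _ = (r s a + β * ∑ s', P h s a s' * Vtil (h + 1) s') + (32 * x * q + 24 * x * t) := by
          rw [e2]; ring
      _ < (r s a + β * ∑ s', P h s a s' * Vtil (h + 1) s') + Δ := by linarith
      _ ≤ Vstar h s := by linarith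
      _ ≤ Q astar := hi
  exact ⟨hQa, fun hall => absurd (hall astar) (not_le.mpr hQa)⟩
end

section
/- (Deterministic core of the support-aware perturbation bound, Lemma 10.) Let c ≥ 0, H ≥ 1, B > 0 be real numbers and f : S → [0,B]. If |q(s) − p(s)| ≤ √(2 p(s) c) + 2c for every s ∈ S, then |∑_{s∈S} (q(s) − p(s)) f(s)| ≤ (1/H) ∑_{s∈S} p(s) f(s) + B · min( 3 · |supp(p)| · H · c, 1 ), where supp(p) = { s ∈ S : p(s) > 0 } and |supp(p)| is its cardinality. -/
open scoped Classical in
/-- Deterministic core of the support-aware perturbation bound (Lemma 10). -/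
theorem support_aware_perturbation_bound
    {S : Type*} [Fintype S]
    (p q : S → ℝ)
    (hp0 : ∀ s, 0 ≤ p s) (hp1 : ∀ s, p s ≤ 1) (hpsum : ∑ s, p s = 1)
    (hq0 : ∀ s, 0 ≤ q s) (hq1 : ∀ s, q s ≤ 1) (hqsum : ∑ s, q s = 1)
    (hsupp : ∀ s, 0 < q s → 0 < p s)
    (c : ℝ) (hc : 0 ≤ c) (H : ℝ) (hH : 1 ≤ H) (B : ℝ) (hB : 0 < B)
    (f : S → ℝ) (hf : ∀ s, 0 ≤ f s ∧ f s ≤ B)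
    (hpert : ∀ s, |q s - p s| ≤ Real.sqrt (2 * p s * c) + 2 * c) :
    |∑ s, (q s - p s) * f s| ≤
      (1 / H) * ∑ s, p s * f s +
        B * min (3 * ((Finset.univ.filter (fun s => 0 < p s)).card : ℝ) * H * c) 1 := by
  classical
  have hH0 : (0:ℝ) < H := lt_of_lt_of_le one_pos hH
  set T := (Finset.univ.filter (fun s => 0 < p s)) with hT
  set N : ℝ := (T.card : ℝ) with hN
  have hf0 : ∀ s, 0 ≤ f s := fun s => (hf s).1
  have hfB : ∀ s, f s ≤ B := fun s => (hf s).2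
  have hpf0 : 0 ≤ ∑ s, p s * f s :=
    Finset.sum_nonneg fun s _ => mul_nonneg (hp0 s) (hf0 s)
  have hqfB : ∑ s, q s * f s ≤ B := by
    calc ∑ s, q s * f s ≤ ∑ s, q s * B :=
          Finset.sum_le_sum fun s _ => mul_le_mul_of_nonneg_left (hfB s) (hq0 s)
      _ = B := by rw [← Finset.sum_mul, hqsum, one_mul]
  have hpfB : ∑ s, p s * f s ≤ B := by
    calc ∑ s, p s * f s ≤ ∑ s, p s * B :=
          Finset.sum_le_sum fun s _ => mul_le_mul_of_nonneg_left (hfB s) (hp0 s)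
      _ = B := by rw [← Finset.sum_mul, hpsum, one_mul]
  have hqf0 : 0 ≤ ∑ s, q s * f s :=
    Finset.sum_nonneg fun s _ => mul_nonneg (hq0 s) (hf0 s)
  have hsplit : ∑ s, (q s - p s) * f s = (∑ s, q s * f s) - ∑ s, p s * f s := by
    rw [← Finset.sum_sub_distrib]; congr 1; ext s; ring
  -- trivial bound
  have habs1 : |∑ s, (q s - p s) * f s| ≤ B := by
    rw [hsplit, abs_le]; constructor <;> linarith
  -- per-term bound for the refined estimate
  have key : ∀ s, |q s - p s| * f s ≤
      (if 0 < p s then (1/H) * (p s * f s) + 3 * H * c * B else 0) := by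
    intro s
    by_cases hs : 0 < p s
    · rw [if_pos hs]
      have hsqrt : Real.sqrt (2 * p s * c) ≤ p s / (2 * H) + c * H := by
        have h1 : 0 ≤ p s / (2 * H) + c * H := by positivity
        have hac : p s / (2 * H) * (2 * H) * c = p s * c := by
          rw [div_mul_cancel₀ _ (by positivity : (2 * H : ℝ) ≠ 0)]
        have h2 : 2 * p s * c ≤ (p s / (2 * H) + c * H) ^ 2 := by
          nlinarith [sq_nonneg (p s / (2 * H) - c * H), hac]
        calc Real.sqrt (2 * p s * c) ≤ Real.sqrt ((p s / (2 * H) + c * H) ^ 2) :=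
              Real.sqrt_le_sqrt h2
          _ = p s / (2 * H) + c * H := Real.sqrt_sq h1
      have h3 : |q s - p s| * f s ≤ (Real.sqrt (2 * p s * c) + 2 * c) * f s :=
        mul_le_mul_of_nonneg_right (hpert s) (hf0 s)
      have h4 : (Real.sqrt (2 * p s * c) + 2 * c) * f s ≤
          (p s / (2 * H) + c * H + 2 * c) * f s :=
        mul_le_mul_of_nonneg_right (by linarith) (hf0 s)
      have h5 : (p s / (2 * H) + c * H + 2 * c) * f s ≤
          (1/H) * (p s * f s) + 3 * H * c * B := by
        have hpf : 0 ≤ p s * f s := mul_nonneg (hp0 s) (hf0 s)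
        have e1 : p s / (2 * H) * f s ≤ (1/H) * (p s * f s) := by
          have hd : 0 ≤ (p s * f s) / (2 * H) := div_nonneg hpf (by positivity)
          have he : 1/H * (p s * f s) - p s / (2 * H) * f s = (p s * f s) / (2 * H) := by
            field_simp; ring
          linarith
        have e2 : (c * H + 2 * c) * f s ≤ 3 * H * c * B := by
          have h6 : c * H + 2 * c ≤ 3 * H * c := by nlinarith
          have h7 : (0:ℝ) ≤ c * H + 2 * c := by positivity
          calc (c * H + 2 * c) * f s ≤ (c * H + 2 * c) * B :=
                mul_le_mul_of_nonneg_left (hfB s) h7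
            _ ≤ 3 * H * c * B := mul_le_mul_of_nonneg_right h6 hB.le
        have he2 : (p s / (2 * H) + c * H + 2 * c) * f s
            = p s / (2 * H) * f s + (c * H + 2 * c) * f s := by ring
        linarith
      linarith
    · rw [if_neg hs]
      have hp : p s = 0 := le_antisymm (not_lt.mp hs) (hp0 s)
      have hq : q s = 0 := by
        by_contra h
        have : 0 < q s := lt_of_le_of_ne (hq0 s) (Ne.symm h)
        exact hs (hsupp s this)
      simp [hp, hq]
  have habs2 : |∑ s, (q s - p s) * f s| ≤ (1/H) * (∑ s, p s * f s) + 3 * N * H * c * B := by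
    calc |∑ s, (q s - p s) * f s| ≤ ∑ s, |(q s - p s) * f s| := Finset.abs_sum_le_sum_abs _ _
      _ = ∑ s, |q s - p s| * f s := by
          apply Finset.sum_congr rfl; intro s _
          rw [abs_mul, abs_of_nonneg (hf0 s)]
      _ ≤ ∑ s, (if 0 < p s then (1/H) * (p s * f s) + 3 * H * c * B else 0) :=
          Finset.sum_le_sum fun s _ => key s
      _ = ∑ s ∈ T, ((1/H) * (p s * f s) + 3 * H * c * B) := by
          rw [hT, Finset.sum_filter]
      _ = (1/H) * (∑ s ∈ T, p s * f s) + N * (3 * H * c * B) := by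
          rw [Finset.sum_add_distrib, Finset.sum_const, ← Finset.mul_sum]
          simp [hN, mul_comm]
      _ ≤ (1/H) * (∑ s, p s * f s) + 3 * N * H * c * B := by
          have hsub : ∑ s ∈ T, p s * f s ≤ ∑ s, p s * f s := by
            apply Finset.sum_le_sum_of_subset_of_nonneg (Finset.filter_subset _ _)
            intro s _ _; exact mul_nonneg (hp0 s) (hf0 s)
          have : (1/H) * (∑ s ∈ T, p s * f s) ≤ (1/H) * (∑ s, p s * f s) :=
            mul_le_mul_of_nonneg_left hsub (by positivity)
          nlinarith
  have hN0 : 0 ≤ N := Nat.cast_nonneg _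
  rcases le_total (3 * N * H * c) 1 with h | h
  · rw [min_eq_left h]; nlinarith [habs2]
  · rw [min_eq_right h, mul_one]
    have : 0 ≤ (1/H) * ∑ s, p s * f s := mul_nonneg (by positivity) hpf0
    linarith
end

section
/- (Sum of inverse square-root counts, Lemma 11.) ∑_{i=1}^M 1/√(n_i) ≤ 2 √(|U| · M). -/
lemma sum_one_div_sqrt_le (m : ℕ) :
    ∑ k ∈ Finset.Icc 1 m, 1 / Real.sqrt k ≤ 2 * Real.sqrt m := by
  induction m with
  | zero => simp
  | succ m ih =>
    rw [show m + 1 = m + 1 from rfl, Finset.sum_Icc_succ_top (by omega)]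
    have ha : (0:ℝ) ≤ Real.sqrt m := Real.sqrt_nonneg _
    have hb : (0:ℝ) < Real.sqrt (m+1) := Real.sqrt_pos.mpr (by positivity)
    have ha2 : (Real.sqrt m)^2 = m := Real.sq_sqrt (by positivity)
    have hb2 : (Real.sqrt (m+1))^2 = (m:ℝ)+1 := by
      rw [Real.sq_sqrt (by positivity)]
    have key : 1 / Real.sqrt ((m:ℝ)+1) ≤ 2 * Real.sqrt (m+1) - 2 * Real.sqrt m := by
      rw [div_le_iff₀ hb]
      nlinarith [sq_nonneg (Real.sqrt (m+1) - Real.sqrt m)]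
    push_cast
    calc ∑ k ∈ Finset.Icc 1 m, 1 / Real.sqrt k + 1 / Real.sqrt ((m:ℝ)+1)
        ≤ 2 * Real.sqrt m + (2 * Real.sqrt (m+1) - 2 * Real.sqrt m) :=
          add_le_add ih key
      _ = 2 * Real.sqrt ((m:ℝ)+1) := by ring

/-- Sum of inverse square-root counts (Lemma 11): for a sequence `y₁,…,y_M` of elements of a
finite set `U`, with `nᵢ` the number of occurrences of `yᵢ` among the first `i` terms,
`∑ 1/√nᵢ ≤ 2 √(|U|·M)`. -/
theorem sum_inverse_sqrt_counts
    {U : Type*} [Fintype U] [Nonempty U] [DecidableEq U]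
    (M : ℕ) (y : Fin M → U) :
    ∑ i : Fin M,
        1 / Real.sqrt ((Finset.univ.filter (fun j : Fin M => j ≤ i ∧ y j = y i)).card) ≤
      2 * Real.sqrt ((Fintype.card U : ℝ) * M) := by
  classical
  set n : Fin M → ℕ := fun i => (Finset.univ.filter (fun j : Fin M => j ≤ i ∧ y j = y i)).card with hn
  set m : U → ℕ := fun u => (Finset.univ.filter (fun j : Fin M => y j = u)).card with hm
  -- fiberwise decomposition
  have hfib : ∑ u : U, ∑ i ∈ Finset.univ.filter (fun i => y i = u), 1 / Real.sqrt (n i)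
      = ∑ i : Fin M, 1 / Real.sqrt (n i) :=
    Finset.sum_fiberwise _ _ _
  have key : ∀ u : U, ∑ i ∈ Finset.univ.filter (fun i => y i = u), 1 / Real.sqrt (n i)
      ≤ 2 * Real.sqrt (m u) := by
    intro u
    have hmono : ∀ i ∈ Finset.univ.filter (fun i => y i = u),
        ∀ j ∈ Finset.univ.filter (fun i => y i = u), i < j → n i < n j := by
      intro i hi j hj hij
      simp only [Finset.mem_filter, Finset.mem_univ, true_and] at hi hj
      apply Finset.card_lt_card
      constructor
      · intro k hk
        simp only [Finset.mem_filter, Finset.mem_univ, true_and] at hk ⊢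
        exact ⟨hk.1.trans hij.le, hk.2.trans (hi.trans hj.symm)⟩
      · intro hsub
        have : j ∈ Finset.univ.filter (fun k : Fin M => k ≤ i ∧ y k = y i) :=
          hsub (by simp)
        simp only [Finset.mem_filter, Finset.mem_univ, true_and] at this
        exact absurd this.1 (not_le.mpr hij)
    have hinj : Set.InjOn n (Finset.univ.filter (fun i => y i = u)) := by
      intro i hi j hj hij
      by_contra hne
      rcases lt_or_gt_of_ne hne with h | h
      · exact absurd hij (ne_of_lt (hmono i hi j hj h))
      · exact absurd hij.symm (ne_of_lt (hmono j hj i hi h))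
    have himg : (Finset.univ.filter (fun i => y i = u)).image n ⊆ Finset.Icc 1 (m u) := by
      intro k hk
      simp only [Finset.mem_image, Finset.mem_filter, Finset.mem_univ, true_and] at hk
      obtain ⟨i, hi, rfl⟩ := hk
      rw [Finset.mem_Icc]
      constructor
      · rw [Nat.one_le_iff_ne_zero, ← Nat.pos_iff_ne_zero, Finset.card_pos]
        exact ⟨i, by simp⟩
      · apply Finset.card_le_card
        intro k hk
        simp only [Finset.mem_filter, Finset.mem_univ, true_and] at hk ⊢
        exact hk.2.trans hi
    calc ∑ i ∈ Finset.univ.filter (fun i => y i = u), 1 / Real.sqrt (n i)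
        = ∑ k ∈ (Finset.univ.filter (fun i => y i = u)).image n, 1 / Real.sqrt k :=
          (Finset.sum_image (f := fun k : ℕ => 1 / Real.sqrt k) (fun i hi j hj h => hinj hi hj h)).symm
      _ ≤ ∑ k ∈ Finset.Icc 1 (m u), 1 / Real.sqrt k :=
          Finset.sum_le_sum_of_subset_of_nonneg himg (fun k _ _ => by positivity)
      _ ≤ 2 * Real.sqrt (m u) := sum_one_div_sqrt_le _
  have hsum_m : ∑ u : U, m u = M := by
    rw [hm]
    have := Finset.card_eq_sum_card_fiberwise
      (f := y) (s := (Finset.univ : Finset (Fin M))) (t := (Finset.univ : Finset U))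
      (fun i _ => Finset.mem_univ _)
    simpa using this.symm
  have cauchy : ∑ u : U, Real.sqrt (m u) ≤ Real.sqrt ((Fintype.card U : ℝ) * M) := by
    have h1 : (∑ u : U, Real.sqrt (m u))^2 ≤ (Fintype.card U : ℝ) * M := by
      have := sq_sum_le_card_mul_sum_sq (s := (Finset.univ : Finset U))
        (f := fun u => Real.sqrt (m u))
      calc (∑ u : U, Real.sqrt (m u))^2
          ≤ (Finset.univ : Finset U).card * ∑ u : U, Real.sqrt (m u) ^ 2 := this
        _ = (Fintype.card U : ℝ) * M := by
            simp only [Real.sq_sqrt (Nat.cast_nonneg _)]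
            rw [Finset.card_univ, ← Nat.cast_sum, hsum_m]
    calc ∑ u : U, Real.sqrt (m u)
        = Real.sqrt ((∑ u : U, Real.sqrt (m u))^2) := by
          rw [Real.sqrt_sq (Finset.sum_nonneg fun u _ => Real.sqrt_nonneg _)]
      _ ≤ Real.sqrt ((Fintype.card U : ℝ) * M) := Real.sqrt_le_sqrt h1
  calc ∑ i : Fin M, 1 / Real.sqrt (n i)
      = ∑ u : U, ∑ i ∈ Finset.univ.filter (fun i => y i = u), 1 / Real.sqrt (n i) := hfib.symm
    _ ≤ ∑ u : U, 2 * Real.sqrt (m u) := Finset.sum_le_sum fun u _ => key u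
    _ = 2 * ∑ u : U, Real.sqrt (m u) := by rw [Finset.mul_sum]
    _ ≤ 2 * Real.sqrt ((Fintype.card U : ℝ) * M) := by linarith [cauchy]
end

section
/- (Sum of inverse counts, Lemma 12.) ∑_{i=1}^M 1/n_i ≤ 2 |U| · ln(M + 1). -/
lemma harm_le_two_log (m : ℕ) :
    ∑ k ∈ Finset.Icc 1 m, (1 / (k : ℝ)) ≤ 2 * Real.log (m + 1) := by
  induction m with
  | zero => simp
  | succ n ih =>
    rw [Finset.sum_Icc_succ_top (by omega)]
    have h1 : (0:ℝ) < (n:ℝ) + 1 := by positivity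
    have h2 : (0:ℝ) < (n:ℝ) + 2 := by positivity
    have hlog : Real.log (((n:ℝ)+1)/((n:ℝ)+2)) ≤ ((n:ℝ)+1)/((n:ℝ)+2) - 1 :=
      Real.log_le_sub_one_of_pos (by positivity)
    have hdiv : Real.log (((n:ℝ)+1)/((n:ℝ)+2)) = Real.log ((n:ℝ)+1) - Real.log ((n:ℝ)+2) :=
      Real.log_div (by positivity) (by positivity)
    have hkey : 1/(((n:ℕ)+1:ℕ):ℝ) ≤ 2 * (Real.log ((n:ℝ)+2) - Real.log ((n:ℝ)+1)) := by
      push_cast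
      rw [hdiv] at hlog
      have heq : ((n:ℝ)+1)/((n:ℝ)+2) - 1 = -(1/((n:ℝ)+2)) := by field_simp; ring
      rw [heq] at hlog
      have h3 : 1/((n:ℝ)+1) ≤ 2/((n:ℝ)+2) := by
        rw [div_le_div_iff₀ h1 h2]; nlinarith
      have h5 : (2:ℝ)/((n:ℝ)+2) = 2 * (1/((n:ℝ)+2)) := by ring
      linarith
    have h4 : Real.log ((n:ℝ)+1+1) = Real.log ((n:ℝ)+2) := congrArg Real.log (by ring)
    push_cast at *
    linarith

/-- Sum of inverse counts (Lemma 12): for a sequence `y₁,…,y_M` of elements of a finite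
set `U`, with `nᵢ` the number of occurrences of `yᵢ` among the first `i` terms,
`∑ 1/nᵢ ≤ 2 |U| ln(M+1)`. -/
theorem sum_inverse_counts
    {U : Type*} [Fintype U] [Nonempty U] [DecidableEq U]
    (M : ℕ) (y : Fin M → U) :
    ∑ i : Fin M,
        1 / (((Finset.univ.filter (fun j : Fin M => j ≤ i ∧ y j = y i)).card : ℝ)) ≤
      2 * (Fintype.card U : ℝ) * Real.log (M + 1) := by
  classical
  set f : Fin M → ℕ := fun i => (Finset.univ.filter (fun j : Fin M => j ≤ i ∧ y j = y i)).card with hf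
  have hsplit : ∑ i : Fin M, (1 / (f i : ℝ)) =
      ∑ u : U, ∑ i ∈ Finset.univ.filter (fun i => y i = u), (1 / (f i : ℝ)) :=
    (Finset.sum_fiberwise _ _ _).symm
  rw [hsplit]
  have hstep : ∀ u : U, ∑ i ∈ Finset.univ.filter (fun i => y i = u), (1 / (f i : ℝ))
      ≤ 2 * Real.log (M + 1) := by
    intro u
    set S := Finset.univ.filter (fun i : Fin M => y i = u) with hS
    -- f is injective on S and maps into Icc 1 S.card
    have hmem : ∀ i ∈ S, i ∈ Finset.univ.filter (fun j : Fin M => j ≤ i ∧ y j = y i) := by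
      intro i _
      simp
    have hmono : ∀ i ∈ S, ∀ i' ∈ S, i < i' → f i < f i' := by
      intro i hi i' hi' hlt
      apply Finset.card_lt_card
      constructor
      · intro j hj
        simp only [Finset.mem_filter, Finset.mem_univ, true_and] at hj ⊢
        have hyi : y i = u := by simpa [hS] using hi
        have hyi' : y i' = u := by simpa [hS] using hi'
        exact ⟨le_trans hj.1 hlt.le, by rw [hj.2, hyi, hyi']⟩
      · intro hsub
        have := hsub (hmem i' hi')
        simp only [Finset.mem_filter, Finset.mem_univ, true_and] at this
        exact absurd this.1 (not_le.mpr hlt)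
    have hinj : Set.InjOn f S := by
      intro a ha b hb hab
      rcases lt_trichotomy a b with h | h | h
      · exact absurd hab (ne_of_lt (hmono a ha b hb h))
      · exact h
      · exact absurd hab.symm (ne_of_lt (hmono b hb a ha h))
    have hrange : ∀ i ∈ S, f i ∈ Finset.Icc 1 S.card := by
      intro i hi
      rw [Finset.mem_Icc]
      constructor
      · exact Finset.card_pos.mpr ⟨i, hmem i hi⟩
      · apply Finset.card_le_card
        intro j hj
        simp only [Finset.mem_filter, Finset.mem_univ, true_and] at hj
        have hyi : y i = u := by simpa [hS] using hi
        simp [hS, hj.2, hyi]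
    calc ∑ i ∈ S, (1 / (f i : ℝ)) = ∑ k ∈ S.image f, (1 / (k : ℝ)) := by
          rw [Finset.sum_image (fun a ha b hb h => hinj ha hb h)]
      _ ≤ ∑ k ∈ Finset.Icc 1 S.card, (1 / (k : ℝ)) := by
          apply Finset.sum_le_sum_of_subset_of_nonneg
          · intro k hk
            obtain ⟨i, hi, rfl⟩ := Finset.mem_image.mp hk
            exact hrange i hi
          · intros; positivity
      _ ≤ 2 * Real.log (S.card + 1) := harm_le_two_log _
      _ ≤ 2 * Real.log (M + 1) := by
          have hc : S.card ≤ M := by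
            simpa using Finset.card_le_card (Finset.subset_univ S)
          have h6 : (S.card : ℝ) + 1 ≤ (M:ℝ) + 1 := by exact_mod_cast Nat.add_le_add_right hc 1
          gcongr
  calc ∑ u : U, ∑ i ∈ Finset.univ.filter (fun i => y i = u), (1 / (f i : ℝ))
      ≤ ∑ _u : U, 2 * Real.log (M + 1) := Finset.sum_le_sum (fun u _ => hstep u)
    _ = 2 * (Fintype.card U : ℝ) * Real.log (M + 1) := by
        rw [Finset.sum_const, Finset.card_univ, nsmul_eq_mul]; ring
end

section
/- (Anytime Bernstein bound for empirical transition estimates, first part of Lemma 9, i.i.d. formulation.) Let B > 0 and f : S → ℝ with |f(s)| ≤ B for all s ∈ S, and let δ ∈ (0,1). Then with probability at least 1 − δ, simultaneously for all n ≥ 1: | (1/n) ∑_{i=1}^n f(X_i) − E_μ[f] | ≤ 16 √( Var_μ(f) · ln(2n/δ) / n ) + 12 B · ln(2n/δ) / n; in particular this right-hand side is also at most 16 B √( ln(2n/δ) / n ) + 12 B ln(2n/δ) / n. -/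
open MeasureTheory ProbabilityTheory

lemma exp_le_one_add_add_sq {x : ℝ} (hx : |x| ≤ 1) :
    Real.exp x ≤ 1 + x + x ^ 2 := by
  have h := Real.exp_bound hx (n := 2) (by norm_num)
  have h2 : ∑ m ∈ Finset.range 2, x ^ m / m.factorial = 1 + x := by
    simp [Finset.sum_range_succ]
  rw [h2] at h
  norm_num [Nat.factorial] at h
  have h3 := (abs_le.mp h).2
  have hx2 : |x| ^ 2 = x ^ 2 := sq_abs x
  nlinarith [sq_nonneg x]

lemma integrable_comp_of_fintype {S : Type*} [Fintype S] [MeasurableSpace S]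
    [MeasurableSingletonClass S] {Ω : Type*} [MeasurableSpace Ω]
    (Pr : Measure Ω) [IsProbabilityMeasure Pr]
    {X : Ω → S} (hX : Measurable X) (h : S → ℝ) :
    Integrable (fun ω => h (X ω)) Pr := by
  have hmeas : Measurable fun ω => h (X ω) := (measurable_of_countable h).comp hX
  refine (integrable_const (∑ s, |h s|)).mono' hmeas.aestronglyMeasurable ?_
  filter_upwards with ω
  rw [Real.norm_eq_abs]
  exact Finset.single_le_sum (f := fun s => |h s|) (fun s _ => abs_nonneg _) (Finset.mem_univ _)

lemma integral_comp_eq_sum {S : Type*} [Fintype S] [MeasurableSpace S]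
    [MeasurableSingletonClass S] {Ω : Type*} [MeasurableSpace Ω]
    (Pr : Measure Ω) [IsProbabilityMeasure Pr] (μ : Measure S) [IsProbabilityMeasure μ]
    {X : Ω → S} (hX : Measurable X) (hlaw : Measure.map X Pr = μ) (h : S → ℝ) :
    ∫ ω, h (X ω) ∂Pr = ∑ s, (μ {s}).toReal * h s := by
  rw [← integral_map hX.aemeasurable (measurable_of_countable h).aestronglyMeasurable, hlaw,
    integral_fintype .of_finite]
  simp [smul_eq_mul, Measure.real]

lemma sum_toReal_singleton_eq_one {S : Type*} [Fintype S] [MeasurableSpace S]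
    [MeasurableSingletonClass S] (μ : Measure S) [IsProbabilityMeasure μ] :
    ∑ s, (μ {s}).toReal = 1 := by
  have := integral_fintype (μ := μ) (f := fun _ => (1:ℝ)) .of_finite
  simpa [Measure.real] using this.symm

lemma chernoff_tail {S : Type*} [Fintype S] [MeasurableSpace S] [MeasurableSingletonClass S]
    {Ω : Type*} [MeasurableSpace Ω] (Pr : Measure Ω) [IsProbabilityMeasure Pr]
    (μ : Measure S) [IsProbabilityMeasure μ]
    (X : ℕ → Ω → S) (hXmeas : ∀ i, Measurable (X i))
    (hindep : iIndepFun X Pr)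
    (hlaw : ∀ i, Measure.map (X i) Pr = μ)
    (g : S → ℝ) (c V t a : ℝ) (hc : 0 < c) (hgc : ∀ s, |g s| ≤ c)
    (hmean : ∑ s, (μ {s}).toReal * g s = 0)
    (hvar : ∑ s, (μ {s}).toReal * g s ^ 2 ≤ V)
    (ht0 : 0 ≤ t) (htc : t * c ≤ 1) (n : ℕ) :
    Pr {ω | a ≤ ∑ i ∈ Finset.range n, g (X i ω)} ≤
      ENNReal.ofReal (Real.exp (-t * a + n * (t ^ 2 * V))) := by
  set Y : ℕ → Ω → ℝ := fun i ω => g (X i ω) with hY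
  have hw : ∀ s : S, 0 ≤ (μ {s}).toReal := fun s => ENNReal.toReal_nonneg
  have hV0 : 0 ≤ V := le_trans (Finset.sum_nonneg fun s _ => mul_nonneg (hw s) (sq_nonneg _)) hvar
  have hYmeas : ∀ i, Measurable (Y i) := fun i => (measurable_of_countable g).comp (hXmeas i)
  have hYindep : iIndepFun Y Pr :=
    hindep.comp (fun _ => g) (fun _ => measurable_of_countable g)
  -- single mgf bound
  have hmgf : ∀ i, mgf (Y i) Pr t ≤ Real.exp (t ^ 2 * V) := by
    intro i
    have h1 : mgf (Y i) Pr t = ∑ s, (μ {s}).toReal * Real.exp (t * g s) :=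
      integral_comp_eq_sum Pr μ (hXmeas i) (hlaw i) (fun s => Real.exp (t * g s))
    have h2 : ∀ s : S, Real.exp (t * g s) ≤ 1 + t * g s + (t * g s) ^ 2 := by
      intro s
      refine exp_le_one_add_add_sq ?_
      rw [abs_mul, abs_of_nonneg ht0]
      calc t * |g s| ≤ t * c := by nlinarith [hgc s, abs_nonneg (g s)]
        _ ≤ 1 := htc
    have h3 : ∑ s, (μ {s}).toReal * Real.exp (t * g s) ≤
        ∑ s, (μ {s}).toReal * (1 + t * g s + (t * g s) ^ 2) :=
      Finset.sum_le_sum fun s _ => mul_le_mul_of_nonneg_left (h2 s) (hw s)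
    have h4 : ∑ s, (μ {s}).toReal * (1 + t * g s + (t * g s) ^ 2) =
        (∑ s, (μ {s}).toReal) + t * (∑ s, (μ {s}).toReal * g s)
          + t ^ 2 * (∑ s, (μ {s}).toReal * g s ^ 2) := by
      rw [Finset.mul_sum, Finset.mul_sum, ← Finset.sum_add_distrib, ← Finset.sum_add_distrib]
      exact Finset.sum_congr rfl fun s _ => by ring
    rw [h1]
    refine le_trans h3 ?_
    rw [h4, sum_toReal_singleton_eq_one μ, hmean]
    have h5 : t ^ 2 * (∑ s, (μ {s}).toReal * g s ^ 2) ≤ t ^ 2 * V :=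
      mul_le_mul_of_nonneg_left hvar (sq_nonneg t)
    calc 1 + t * 0 + t ^ 2 * (∑ s, (μ {s}).toReal * g s ^ 2) ≤ t ^ 2 * V + 1 := by linarith
      _ ≤ Real.exp (t ^ 2 * V) := Real.add_one_le_exp _
  -- mgf of sum
  have hsum_mgf : mgf (∑ i ∈ Finset.range n, Y i) Pr t ≤ Real.exp (n * (t ^ 2 * V)) := by
    rw [hYindep.mgf_sum hYmeas]
    calc ∏ i ∈ Finset.range n, mgf (Y i) Pr t ≤ ∏ _i ∈ Finset.range n, Real.exp (t ^ 2 * V) :=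
          Finset.prod_le_prod (fun i _ => mgf_nonneg) (fun i _ => hmgf i)
      _ = Real.exp (t ^ 2 * V) ^ n := by rw [Finset.prod_const, Finset.card_range]
      _ = Real.exp (n * (t ^ 2 * V)) := (Real.exp_nat_mul _ n).symm
  -- integrability of exp (t * sum)
  have hIntSum : Integrable (fun ω => Real.exp (t * (∑ i ∈ Finset.range n, Y i) ω)) Pr := by
    have hmeas : Measurable fun ω => Real.exp (t * (∑ i ∈ Finset.range n, Y i) ω) := by
      apply Measurable.exp
      apply Measurable.const_mul
      have h := Finset.measurable_sum (Finset.range n) (fun i (_ : i ∈ Finset.range n) => hYmeas i)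
      convert h using 1
      ext ω
      simp [Finset.sum_apply]
    refine (integrable_const (Real.exp (t * (n * c)))).mono' hmeas.aestronglyMeasurable ?_
    filter_upwards with ω
    rw [Real.norm_eq_abs, abs_of_pos (Real.exp_pos _), Real.exp_le_exp]
    have hb : (∑ i ∈ Finset.range n, Y i) ω ≤ n * c := by
      rw [Finset.sum_apply]
      calc ∑ i ∈ Finset.range n, Y i ω ≤ ∑ _i ∈ Finset.range n, c :=
            Finset.sum_le_sum fun i _ => (abs_le.mp (hgc (X i ω))).2
        _ = n * c := by rw [Finset.sum_const, Finset.card_range, nsmul_eq_mul]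
    nlinarith
  -- Chernoff
  have hch := measure_ge_le_exp_mul_mgf (μ := Pr) (X := ∑ i ∈ Finset.range n, Y i) a ht0 hIntSum
  have hset : {ω | a ≤ ∑ i ∈ Finset.range n, g (X i ω)} =
      {ω | a ≤ (∑ i ∈ Finset.range n, Y i) ω} := by
    ext ω; simp [Finset.sum_apply, hY]
  rw [hset]
  have hne : Pr {ω | a ≤ (∑ i ∈ Finset.range n, Y i) ω} ≠ ⊤ := measure_ne_top _ _
  rw [← ENNReal.ofReal_toReal hne]
  apply ENNReal.ofReal_le_ofReal
  calc (Pr {ω | a ≤ (∑ i ∈ Finset.range n, Y i) ω}).toReal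
      ≤ Real.exp (-t * a) * mgf (∑ i ∈ Finset.range n, Y i) Pr t := hch
    _ ≤ Real.exp (-t * a) * Real.exp (n * (t ^ 2 * V)) := by
        exact mul_le_mul_of_nonneg_left hsum_mgf (Real.exp_pos _).le
    _ = Real.exp (-t * a + n * (t ^ 2 * V)) := (Real.exp_add _ _).symm

set_option maxHeartbeats 2000000 in
/-- Anytime Bernstein bound for empirical estimates (first part of Lemma 9, i.i.d.
formulation): with probability at least `1 - δ`, simultaneously for all `n ≥ 1`, the
empirical mean of `f` deviates from its true mean by at most
`16 √(Var_μ(f) ln(2n/δ)/n) + 12 B ln(2n/δ)/n`; moreover this bound is itself at most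
`16 B √(ln(2n/δ)/n) + 12 B ln(2n/δ)/n`. -/
theorem anytime_bernstein_empirical_mean
    {S : Type*} [Fintype S] [MeasurableSpace S] [MeasurableSingletonClass S]
    {Ω : Type*} [MeasurableSpace Ω] (Pr : Measure Ω) [IsProbabilityMeasure Pr]
    (μ : Measure S) [IsProbabilityMeasure μ]
    (X : ℕ → Ω → S) (hXmeas : ∀ i, Measurable (X i))
    (hindep : iIndepFun X Pr)
    (hlaw : ∀ i, Measure.map (X i) Pr = μ)
    (B : ℝ) (hB : 0 < B)
    (f : S → ℝ) (hf : ∀ s, |f s| ≤ B)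
    (δ : ℝ) (hδ0 : 0 < δ) (hδ1 : δ < 1) :
    ENNReal.ofReal (1 - δ) ≤
      Pr {ω | ∀ n : ℕ, 1 ≤ n →
        |(∑ i ∈ Finset.range n, f (X i ω)) / n - ∑ s, (μ {s}).toReal * f s| ≤
          16 * Real.sqrt
              (((∑ s, (μ {s}).toReal * f s ^ 2) - (∑ s, (μ {s}).toReal * f s) ^ 2)
                * Real.log (2 * n / δ) / n)
            + 12 * B * Real.log (2 * n / δ) / n} ∧
    ∀ n : ℕ, 1 ≤ n →
      16 * Real.sqrt
          (((∑ s, (μ {s}).toReal * f s ^ 2) - (∑ s, (μ {s}).toReal * f s) ^ 2)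
            * Real.log (2 * n / δ) / n)
        + 12 * B * Real.log (2 * n / δ) / n ≤
      16 * B * Real.sqrt (Real.log (2 * n / δ) / n)
        + 12 * B * Real.log (2 * n / δ) / n := by
  classical
  have hw : ∀ s : S, 0 ≤ (μ {s}).toReal := fun s => ENNReal.toReal_nonneg
  have hsum1 := sum_toReal_singleton_eq_one μ
  set m : ℝ := ∑ s, (μ {s}).toReal * f s with hm
  set V : ℝ := (∑ s, (μ {s}).toReal * f s ^ 2) - m ^ 2 with hVdef
  have hmB : |m| ≤ B := by
    rw [hm]
    calc |∑ s, (μ {s}).toReal * f s| ≤ ∑ s, |(μ {s}).toReal * f s| :=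
          Finset.abs_sum_le_sum_abs _ _
      _ ≤ ∑ s, (μ {s}).toReal * B := Finset.sum_le_sum fun s _ => by
          rw [abs_mul, abs_of_nonneg (hw s)]
          exact mul_le_mul_of_nonneg_left (hf s) (hw s)
      _ = B := by rw [← Finset.sum_mul, hsum1, one_mul]
  have hVexp : ∑ s, (μ {s}).toReal * (f s - m) ^ 2 = V := by
    have h : ∀ s : S, (μ {s}).toReal * (f s - m) ^ 2 =
        (μ {s}).toReal * f s ^ 2 - 2 * m * ((μ {s}).toReal * f s) + m ^ 2 * (μ {s}).toReal :=
      fun s => by ring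
    rw [Finset.sum_congr rfl (fun s _ => h s), Finset.sum_add_distrib,
      Finset.sum_sub_distrib, ← Finset.mul_sum, ← Finset.mul_sum, hsum1, ← hm, hVdef]
    ring
  have hV0 : 0 ≤ V :=
    hVexp ▸ Finset.sum_nonneg fun s _ => mul_nonneg (hw s) (sq_nonneg _)
  have hVB : V ≤ B ^ 2 := by
    have h1 : ∑ s, (μ {s}).toReal * f s ^ 2 ≤ B ^ 2 := by
      calc ∑ s, (μ {s}).toReal * f s ^ 2 ≤ ∑ s, (μ {s}).toReal * B ^ 2 :=
            Finset.sum_le_sum fun s _ => by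
              refine mul_le_mul_of_nonneg_left ?_ (hw s)
              calc f s ^ 2 = |f s| ^ 2 := (sq_abs _).symm
                _ ≤ B ^ 2 := pow_le_pow_left₀ (abs_nonneg _) (hf s) 2
        _ = B ^ 2 := by rw [← Finset.sum_mul, hsum1, one_mul]
    rw [hVdef]; nlinarith [sq_nonneg m]
  -- Part 2
  have part2 : ∀ n : ℕ, 1 ≤ n →
      16 * Real.sqrt (V * Real.log (2 * n / δ) / n) + 12 * B * Real.log (2 * n / δ) / n ≤
      16 * B * Real.sqrt (Real.log (2 * n / δ) / n) + 12 * B * Real.log (2 * n / δ) / n := by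
    intro n hn
    have hN0 : (0:ℝ) < n := by exact_mod_cast hn
    have hN1 : (1:ℝ) ≤ n := by exact_mod_cast hn
    have hL0 : 0 ≤ Real.log (2 * n / δ) := by
      apply Real.log_nonneg
      rw [le_div_iff₀ hδ0]
      nlinarith [hN1, hδ1]
    have hLn : 0 ≤ Real.log (2 * n / δ) / n := div_nonneg hL0 hN0.le
    have key : Real.sqrt (V * Real.log (2 * n / δ) / n) ≤
        B * Real.sqrt (Real.log (2 * n / δ) / n) := by
      rw [← Real.sqrt_sq hB.le, ← Real.sqrt_mul (sq_nonneg B)]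
      apply Real.sqrt_le_sqrt
      rw [mul_div_assoc]
      exact mul_le_mul_of_nonneg_right hVB hLn
    nlinarith
  refine ⟨?_, part2⟩
  -- Part 1
  set G : Set Ω := {ω | ∀ n : ℕ, 1 ≤ n →
    |(∑ i ∈ Finset.range n, f (X i ω)) / n - m| ≤
      16 * Real.sqrt (V * Real.log (2 * n / δ) / n)
        + 12 * B * Real.log (2 * n / δ) / n} with hG
  set E : ℕ → Set Ω := fun k => {ω | ¬ (|(∑ i ∈ Finset.range (k+1), f (X i ω)) / (k+1:ℕ) - m| ≤
      16 * Real.sqrt (V * Real.log (2 * (k+1:ℕ) / δ) / (k+1:ℕ))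
        + 12 * B * Real.log (2 * (k+1:ℕ) / δ) / (k+1:ℕ))} with hE
  -- per-index bound
  have hEk : ∀ k : ℕ, Pr (E k) ≤ ENNReal.ofReal (δ / (((k:ℝ)+1) * ((k:ℝ)+2))) := by
    intro k
    set n : ℕ := k + 1 with hn
    set N : ℝ := (n : ℝ) with hNdef
    have hN1 : (1:ℝ) ≤ N := by rw [hNdef]; exact_mod_cast Nat.one_le_iff_ne_zero.mpr (by omega)
    have hN0 : (0:ℝ) < N := by linarith
    set L : ℝ := Real.log (2 * N / δ) with hL
    set L' : ℝ := Real.log (2 * N * (N + 1) / δ) with hL'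
    have hLpos : 0 < L := by
      rw [hL]; apply Real.log_pos; rw [lt_div_iff₀ hδ0]; nlinarith
    have hL'pos : 0 < L' := by
      rw [hL']; apply Real.log_pos; rw [lt_div_iff₀ hδ0]; nlinarith
    have hL'2L : L' ≤ 2 * L := by
      rw [hL', hL]
      have h1 : 2 * N * (N + 1) / δ ≤ (2 * N / δ) ^ 2 := by
        rw [div_pow, div_le_div_iff₀ hδ0 (by positivity)]
        have hstep : (N + 1) * δ ≤ 2 * N := by nlinarith [mul_nonneg (sub_nonneg.mpr hδ1.le) (by linarith : (0:ℝ) ≤ N + 1)]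
        have hmul := mul_le_mul_of_nonneg_left hstep (by positivity : (0:ℝ) ≤ 2 * N * δ)
        nlinarith [hmul]
      calc Real.log (2 * N * (N + 1) / δ) ≤ Real.log ((2 * N / δ) ^ 2) :=
            Real.log_le_log (by positivity) h1
        _ = 2 * Real.log (2 * N / δ) := by
            rw [Real.log_pow]; push_cast; ring
    set a : ℝ := 16 * N * Real.sqrt (V * L / N) + 12 * B * L with ha
    have hsqrt0 : 0 ≤ Real.sqrt (V * L / N) := Real.sqrt_nonneg _
    have h12a : 12 * B * L ≤ a := by rw [ha]; nlinarith
    have ha0 : 0 ≤ a := by nlinarith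
    -- tail bound for one side
    have htail : ∀ g : S → ℝ, (∀ s, |g s| ≤ 2 * B) →
        (∑ s, (μ {s}).toReal * g s = 0) → (∑ s, (μ {s}).toReal * g s ^ 2 ≤ V) →
        Pr {ω | a ≤ ∑ i ∈ Finset.range n, g (X i ω)} ≤ ENNReal.ofReal (Real.exp (-L')) := by
      intro g hgc hmean hvar
      by_cases hVcase : V * N ≤ 4 * B ^ 2 * L'
      · -- small variance: t = 1/(2B)
        set t : ℝ := 1 / (2 * B) with ht
        have ht0 : 0 ≤ t := by positivity
        have htc : t * (2 * B) ≤ 1 := by rw [ht]; field_simp; norm_num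
        refine (chernoff_tail Pr μ X hXmeas hindep hlaw g (2*B) V t a (by positivity)
          hgc hmean hvar ht0 htc n).trans ?_
        apply ENNReal.ofReal_le_ofReal
        apply Real.exp_le_exp.mpr
        have h1 : 3 * L' ≤ t * a := by
          have e1 : t * (12 * B * L) = 6 * L := by rw [ht]; field_simp; ring
          have e2 : t * (12 * B * L) ≤ t * a := mul_le_mul_of_nonneg_left h12a ht0
          linarith
        have h2 : (N:ℝ) * (t ^ 2 * V) ≤ L' := by
          have e1 : (N:ℝ) * (t ^ 2 * V) = (V * N) / (4 * B ^ 2) := by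
            rw [ht]; field_simp; ring
          rw [e1, div_le_iff₀ (by positivity)]
          linarith
        have : (n : ℝ) = N := rfl
        rw [this]
        linarith
      · -- large variance: t = sqrt(L'/(N V))
        push_neg at hVcase
        have hVpos : 0 < V := by
          have h4 : 0 < 4 * B ^ 2 * L' := by positivity
          by_contra h
          push_neg at h
          have hVN : V * N ≤ 0 := mul_nonpos_iff.mpr (Or.inr ⟨h, hN0.le⟩)
          nlinarith [h4]
        set t : ℝ := Real.sqrt (L' / (N * V)) with ht
        have ht0 : 0 ≤ t := Real.sqrt_nonneg _
        have htsq : t ^ 2 = L' / (N * V) := Real.sq_sqrt (by positivity)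
        have htle : t ≤ 1 / (2 * B) := by
          have h6 : t ^ 2 ≤ (1 / (2 * B)) ^ 2 := by
            rw [htsq, div_le_iff₀ (by positivity : (0:ℝ) < N * V)]
            have e : (1 / (2 * B)) ^ 2 * (N * V) = (N * V) / (4 * B ^ 2) := by
              field_simp; ring
            rw [e, le_div_iff₀ (by positivity)]
            nlinarith
          calc t = Real.sqrt (t ^ 2) := (Real.sqrt_sq ht0).symm
            _ ≤ Real.sqrt ((1 / (2 * B)) ^ 2) := Real.sqrt_le_sqrt h6
            _ = 1 / (2 * B) := Real.sqrt_sq (by positivity)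
        have htc : t * (2 * B) ≤ 1 := by
          have := mul_le_mul_of_nonneg_right htle (by positivity : (0:ℝ) ≤ 2 * B)
          calc t * (2 * B) ≤ 1 / (2 * B) * (2 * B) := this
            _ = 1 := by field_simp
        refine (chernoff_tail Pr μ X hXmeas hindep hlaw g (2*B) V t a (by positivity)
          hgc hmean hvar ht0 htc n).trans ?_
        apply ENNReal.ofReal_le_ofReal
        apply Real.exp_le_exp.mpr
        have hNtV : (N:ℝ) * (t ^ 2 * V) = L' := by
          rw [htsq]; field_simp
        set u : ℝ := t * (N * Real.sqrt (V * L / N)) with hu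
        have hu0 : 0 ≤ u := by positivity
        have husq : u ^ 2 = L' * L := by
          rw [hu, mul_pow, mul_pow, Real.sq_sqrt (by positivity : (0:ℝ) ≤ V * L / N), htsq]
          field_simp
        have hLL' : (L'/4) ^ 2 ≤ L' * L := by nlinarith
        have huge : L' / 4 ≤ u := by nlinarith [sq_nonneg (u - L'/4), sq_nonneg (u + L'/4)]
        have h2a : 2 * L' ≤ t * a := by
          have e1 : t * a = 16 * u + t * (12 * B * L) := by rw [ha, hu]; ring
          have e2 : 0 ≤ t * (12 * B * L) := by positivity
          nlinarith
        have : (n : ℝ) = N := rfl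
        rw [this, hNtV]
        linarith
    -- combine two tails
    have hsub : E k ⊆ {ω | a ≤ ∑ i ∈ Finset.range n, (f (X i ω) - m)} ∪
        {ω | a ≤ ∑ i ∈ Finset.range n, (m - f (X i ω))} := by
      intro ω hω
      simp only [hE, Set.mem_setOf_eq, not_le] at hω
      set Sf : ℝ := ∑ i ∈ Finset.range n, f (X i ω) with hSf
      have hcast : ((k+1:ℕ):ℝ) = N := by rw [hNdef, hn]
      rw [hcast] at hω
      have heps : N * (16 * Real.sqrt (V * L / N) + 12 * B * L / N) = a := by
        rw [ha]; field_simp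
      have habs : a ≤ |Sf - N * m| := by
        have h1 : |Sf - N * m| = N * |Sf / N - m| := by
          have e : Sf - N * m = N * (Sf / N - m) := by
            field_simp
          rw [e, abs_mul, abs_of_pos hN0]
        rw [h1, ← heps]
        exact mul_le_mul_of_nonneg_left hω.le hN0.le
      have hsumP : ∑ i ∈ Finset.range n, (f (X i ω) - m) = Sf - N * m := by
        rw [Finset.sum_sub_distrib, Finset.sum_const, Finset.card_range, nsmul_eq_mul, hSf]
      have hsumM : ∑ i ∈ Finset.range n, (m - f (X i ω)) = N * m - Sf := by
        rw [Finset.sum_sub_distrib, Finset.sum_const, Finset.card_range, nsmul_eq_mul, hSf]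
      rcases le_abs.mp habs with h | h
      · left; simp only [Set.mem_setOf_eq, hsumP]; exact h
      · right; simp only [Set.mem_setOf_eq, hsumM]; linarith
    have hgcP : ∀ s, |f s - m| ≤ 2 * B := fun s => by
      calc |f s - m| ≤ |f s| + |m| := abs_sub _ _
        _ ≤ 2 * B := by linarith [hf s]
    have hgcM : ∀ s, |m - f s| ≤ 2 * B := fun s => by
      rw [abs_sub_comm]; exact hgcP s
    have hmeanP : ∑ s, (μ {s}).toReal * (f s - m) = 0 := by
      simp only [mul_sub]
      rw [Finset.sum_sub_distrib, ← Finset.sum_mul, hsum1, ← hm]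
      ring
    have hmeanM : ∑ s, (μ {s}).toReal * (m - f s) = 0 := by
      have h : ∀ s : S, (μ {s}).toReal * (m - f s) = -((μ {s}).toReal * (f s - m)) :=
        fun s => by ring
      rw [Finset.sum_congr rfl (fun s _ => h s), Finset.sum_neg_distrib, hmeanP, neg_zero]
    have hvarP : ∑ s, (μ {s}).toReal * (f s - m) ^ 2 ≤ V := le_of_eq hVexp
    have hvarM : ∑ s, (μ {s}).toReal * (m - f s) ^ 2 ≤ V := by
      have h : ∀ s : S, (m - f s) ^ 2 = (f s - m) ^ 2 := fun s => by ring
      simp only [h]; exact hvarP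
    have hexpL' : Real.exp (-L') = δ / (2 * N * (N + 1)) := by
      rw [hL', Real.exp_neg, Real.exp_log (by positivity)]
      rw [inv_div]
    calc Pr (E k) ≤ Pr ({ω | a ≤ ∑ i ∈ Finset.range n, (f (X i ω) - m)} ∪
          {ω | a ≤ ∑ i ∈ Finset.range n, (m - f (X i ω))}) := measure_mono hsub
      _ ≤ Pr {ω | a ≤ ∑ i ∈ Finset.range n, (f (X i ω) - m)} +
          Pr {ω | a ≤ ∑ i ∈ Finset.range n, (m - f (X i ω))} := measure_union_le _ _
      _ ≤ ENNReal.ofReal (Real.exp (-L')) + ENNReal.ofReal (Real.exp (-L')) :=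
          add_le_add (htail _ hgcP hmeanP hvarP) (htail _ hgcM hmeanM hvarM)
      _ = ENNReal.ofReal (δ / (2 * N * (N + 1)) + δ / (2 * N * (N + 1))) := by
          rw [hexpL', ENNReal.ofReal_add (by positivity) (by positivity)]
      _ = ENNReal.ofReal (δ / (((k:ℝ)+1) * ((k:ℝ)+2))) := by
          congr 1
          have hNk : N = (k:ℝ) + 1 := by rw [hNdef, hn]; push_cast; ring
          rw [hNk]
          have h1 : ((k:ℝ) + 1) ≠ 0 := by positivity
          have h2 : ((k:ℝ) + 2) ≠ 0 := by positivity
          field_simp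
          ring
  -- union bound
  have hts : ∑' k : ℕ, ENNReal.ofReal (δ / (((k:ℝ)+1) * ((k:ℝ)+2))) = ENNReal.ofReal δ := by
    have hnn : ∀ k : ℕ, 0 ≤ δ / (((k:ℝ)+1) * ((k:ℝ)+2)) := fun k => by positivity
    have hhs : HasSum (fun k : ℕ => δ / (((k:ℝ)+1) * ((k:ℝ)+2))) δ := by
      rw [hasSum_iff_tendsto_nat_of_nonneg hnn]
      have hps : ∀ nn : ℕ, ∑ j ∈ Finset.range nn, δ / (((j:ℝ)+1) * ((j:ℝ)+2)) =
          δ - δ / ((nn:ℝ) + 1) := by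
        intro nn
        have heq : ∀ j : ℕ, δ / (((j:ℝ)+1) * ((j:ℝ)+2)) =
            δ / ((j:ℝ)+1) - δ / (((j+1:ℕ):ℝ)+1) := by
          intro j
          push_cast
          rw [div_sub_div _ _ (by positivity) (by positivity)]
          rw [div_eq_div_iff (by positivity) (by positivity)]
          ring
        rw [Finset.sum_congr rfl (fun j _ => heq j),
          Finset.sum_range_sub' (f := fun j : ℕ => δ / ((j:ℝ)+1))]
        norm_num
      have ht0 : Filter.Tendsto (fun nn : ℕ => δ / ((nn:ℝ) + 1)) Filter.atTop (nhds 0) :=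
        Filter.Tendsto.div_atTop tendsto_const_nhds
          (Filter.tendsto_atTop_add_const_right _ 1 tendsto_natCast_atTop_atTop)
      have := Filter.Tendsto.sub (tendsto_const_nhds (x := δ)) ht0
      simp only [sub_zero] at this
      exact Filter.Tendsto.congr (fun nn => (hps nn).symm) this
    rw [← ENNReal.ofReal_tsum_of_nonneg hnn hhs.summable, hhs.tsum_eq]
  have hU : Pr (⋃ k, E k) ≤ ENNReal.ofReal δ := by
    refine (measure_iUnion_le E).trans ?_
    rw [← hts]
    exact ENNReal.tsum_le_tsum hEk
  have hGc : Gᶜ ⊆ ⋃ k, E k := by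
    intro ω hω
    simp only [hG, Set.mem_compl_iff, Set.mem_setOf_eq, not_forall, Classical.not_imp] at hω
    obtain ⟨nn, hnn, hfail⟩ := hω
    obtain ⟨k, rfl⟩ : ∃ k, nn = k + 1 := ⟨nn - 1, (Nat.succ_pred_eq_of_pos hnn).symm⟩
    exact Set.mem_iUnion.mpr ⟨k, hfail⟩
  have hPrGc : Pr Gᶜ ≤ ENNReal.ofReal δ := (measure_mono hGc).trans hU
  have hone : ENNReal.ofReal (1 - δ) + ENNReal.ofReal δ = 1 := by
    rw [← ENNReal.ofReal_add (by linarith) hδ0.le]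
    norm_num
  have hsplit : (1 : ENNReal) ≤ Pr G + Pr Gᶜ := by
    rw [← measure_univ (μ := Pr)]
    calc Pr Set.univ = Pr (G ∪ Gᶜ) := by rw [Set.union_compl_self]
      _ ≤ Pr G + Pr Gᶜ := measure_union_le _ _
  have hfinal : ENNReal.ofReal (1 - δ) + ENNReal.ofReal δ ≤ Pr G + ENNReal.ofReal δ := by
    rw [hone]
    exact hsplit.trans (add_le_add le_rfl hPrGc)
  exact (ENNReal.add_le_add_iff_right ENNReal.ofReal_ne_top).mp hfinal
end
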